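/- arXiv:1212.1634 — 6 statements merged into one kernel-verified Lean document; each statement's English description precedes it below -/
import Mathlib

section
/- Let (A_i)_{i∈ℤ/nℤ} be a linear cocycle in GL(2,ℝ) and let (f_i)_{i∈ℤ/nℤ} be a retardable contracting diffeomorphism cocycle with data ((B_i), λ, r, R) which is an ε-perturbation of (A_i), i.e. for each i the set {x : f_i(x) ≠ A_i x} is bounded and sup_{i,x} ‖Df_i(x) − A_i‖ < ε. Suppose for each i an open set N_i ⊂ ℝ² contains both the closed ball of radius R centered at the origin and the set {x : f_i(x) ≠ A_i x}. Then for every m ≥ 0 and all admissible gluing radii r < ρ' < ρ < R, the m-retard (f_{i,m}) is an ε-perturbation of (A_i): sup_{i,x} ‖Df_{i,m}(x) − A_i‖ < ε, and f_{i,m}(x) = A_i x for every x outside N_i. -/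
open Filter Topology

noncomputable section

abbrev M2 := Matrix (Fin 2) (Fin 2) ℝ
abbrev E2 := EuclideanSpace ℝ (Fin 2)

/-- The continuous linear map on Euclidean `ℝ²` induced by a `2 × 2` matrix. -/
def mCLM (A : M2) : E2 →L[ℝ] E2 := Matrix.toEuclideanCLM (𝕜 := ℝ) A

/-- Operator norm (w.r.t. the Euclidean norm) of a `2 × 2` matrix. -/
def mnorm (A : M2) : ℝ := ‖mCLM A‖

/-- Action of a `2 × 2` matrix on a vector of Euclidean `ℝ²`. -/
def mact (A : M2) (x : E2) : E2 := mCLM A x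

/-- The product `A (n-1) * ⋯ * A 0` of a cocycle over `ℤ/nℤ`. -/
def cocProd (n : ℕ) (A : ZMod n → M2) : M2 :=
  (((List.range n).map fun i => A (i : ZMod n)).reverse).prod

/-- The partial product `A (i+j-1) * ⋯ * A i` (indices mod `n`). -/
def partProd (n : ℕ) (A : ZMod n → M2) (i : ZMod n) (j : ℕ) : M2 :=
  (((List.range j).map fun l => A (i + (l : ZMod n))).reverse).prod

/-- The map induced on `ℝ² × ℤ/nℤ` by a cocycle of maps. -/
def step (n : ℕ) (f : ZMod n → E2 → E2) (p : E2 × ZMod n) : E2 × ZMod n :=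
  (f p.2 p.1, p.2 + 1)

/-- A cocycle of maps is contracting if every orbit of the induced map converges to the
zero section. -/
def IsContractingCocycle (n : ℕ) (f : ZMod n → E2 → E2) : Prop :=
  ∀ p : E2 × ZMod n, Tendsto (fun m => ((step n f)^[m] p).1) atTop (𝓝 (0 : E2))

/-- `f` is a `C¹` diffeomorphism of `ℝ²`. -/
def IsC1Diffeo (f : E2 → E2) : Prop :=
  ContDiff ℝ 1 f ∧ Function.Bijective f ∧ ContDiff ℝ 1 (Function.invFun f)

/-- A diffeomorphism cocycle over `ℤ/nℤ`: a family of `C¹` diffeomorphisms of `ℝ²`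
fixing the origin. -/
def IsDiffeoCocycle (n : ℕ) (f : ZMod n → E2 → E2) : Prop :=
  ∀ i, IsC1Diffeo (f i) ∧ f i 0 = 0

/-- `f (i+j-1) ∘ ⋯ ∘ f i`, the composition of `j` consecutive maps of the cocycle. -/
def compUpTo (n : ℕ) (f : ZMod n → E2 → E2) (i : ZMod n) : ℕ → E2 → E2
  | 0 => id
  | j + 1 => f (i + (j : ZMod n)) ∘ compUpTo n f i j

end

/-- A diffeomorphism cocycle is retardable with data `(B, lam, r, R)` if it is linear, given by
`B i`, on the annulus `r ≤ ‖x‖ ≤ R`, and the product of the `B i` in the period is the homothety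
of ratio `lam ∈ (0,1)`, with `0 < r < lam * R`. -/
def IsRetardable (n : ℕ) (f : ZMod n → E2 → E2) (B : ZMod n → M2) (lam r R : ℝ) : Prop :=
  (∀ i, IsUnit (B i)) ∧ 0 < lam ∧ lam < 1 ∧ 0 < r ∧ r < lam * R ∧
  cocProd n B = lam • (1 : M2) ∧
  ∀ (i : ZMod n) (x : E2), r ≤ ‖x‖ → ‖x‖ ≤ R → f i x = mact (B i) x

/-- The `m`-retard of a retardable cocycle, for gluing radii `r < ρ' < ρ < R`. -/
noncomputable def retard (n : ℕ) (f : ZMod n → E2 → E2) (B : ZMod n → M2) (lam ρ' ρ : ℝ) (m : ℕ) :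
    ZMod n → E2 → E2 := fun i x =>
  if ρ ≤ ‖x‖ then f i x
  else if lam ^ m * ρ' ≤ ‖x‖ then mact (B i) x
  else lam ^ m • f i ((lam ^ m)⁻¹ • x)

/-- `f` is an `ε`-perturbation of the linear cocycle `A`: each `f i` coincides with `A i`
outside a bounded set, and `sup_{i,x} ‖D(f i)(x) - A i‖ < ε`. -/
def IsPerturbation (n : ℕ) (ε : ℝ) (f : ZMod n → E2 → E2) (A : ZMod n → M2) : Prop :=
  (∀ i, Bornology.IsBounded {x : E2 | f i x ≠ mact (A i) x}) ∧
  ∃ c : ℝ, c < ε ∧ ∀ (i : ZMod n) (x : E2), ‖fderiv ℝ (f i) x - mCLM (A i)‖ ≤ c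

/-!
The `m`-retard is locally one of three maps: `f i` outside the ball of radius `ρ`, the linear
map `B i` on the gluing annulus, and the conjugate `x ↦ λᵐ f i (λ⁻ᵐ x)` near the origin.
Conjugating by a homothety only moves the base point of a derivative, and `B i` is itself the
derivative of `f i` on the annulus `r < ‖x‖ < R`, so every derivative of the retard is a
derivative of `f i` and the `ε`-bound persists. Outside `N i ⊇ closedBall 0 R` the retard is `f i`,
which already agrees with `A i` there.
-/

theorem fderiv_smul_comp_inv_smul {𝕜 E F : Type*} [NontriviallyNormedField 𝕜]
    [NormedAddCommGroup E] [NormedSpace 𝕜 E] [NormedAddCommGroup F] [NormedSpace 𝕜 F]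
    (f : E → F) {k : 𝕜} (hk : k ≠ 0) (x : E) :
    fderiv 𝕜 (fun z => k • f (k⁻¹ • z)) x = fderiv 𝕜 f (k⁻¹ • x) := by
  change fderiv 𝕜 (k • fun z => f (k⁻¹ • z)) x = _
  rw [fderiv_const_smul_field, Pi.smul_apply, fderiv_comp_smul, smul_smul, mul_inv_cancel₀ hk,
    one_smul]

section Retard

variable {n : ℕ} {f : ZMod n → E2 → E2} {B : ZMod n → M2} {lam r R ρ' ρ : ℝ} {m : ℕ}
  {i : ZMod n} {x : E2}

theorem retard_of_le_norm (hx : ρ ≤ ‖x‖) : retard n f B lam ρ' ρ m i x = f i x := by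
  simp only [retard, if_pos hx]

theorem retard_of_norm_lt (hρ : lam ^ m * ρ' ≤ ρ) (hx : ‖x‖ < lam ^ m * ρ') :
    retard n f B lam ρ' ρ m i x = lam ^ m • f i ((lam ^ m)⁻¹ • x) := by
  simp only [retard, if_neg (hx.trans_le hρ).not_ge, if_neg hx.not_ge]

theorem retard_eq_mact (hlin : ∀ x : E2, r ≤ ‖x‖ → ‖x‖ ≤ R → f i x = mact (B i) x)
    (hk : 0 < lam ^ m) (hrρ' : r ≤ ρ') (hρ'ρ : ρ' ≤ ρ) (hρ'R : ρ' ≤ R)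
    (hx₁ : lam ^ m * r ≤ ‖x‖) (hx₂ : ‖x‖ ≤ R) :
    retard n f B lam ρ' ρ m i x = mact (B i) x := by
  unfold retard
  split_ifs with hρx hinner
  · exact hlin x (by linarith) hx₂
  · rfl
  · have hnorm : ‖(lam ^ m)⁻¹ • x‖ = (lam ^ m)⁻¹ * ‖x‖ := by
      rw [norm_smul, Real.norm_of_nonneg (inv_nonneg.2 hk.le)]
    rw [hlin _ (by rw [hnorm, le_inv_mul_iff₀ hk]; exact hx₁)
      (by rw [hnorm, inv_mul_le_iff₀ hk]; nlinarith), mact, map_smul, smul_smul,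
      mul_inv_cancel₀ hk.ne', one_smul, mact]

theorem setOf_retard_ne_subset (A : M2) :
    {x : E2 | retard n f B lam ρ' ρ m i x ≠ mact A x} ⊆
      Metric.closedBall 0 ρ ∪ {x : E2 | f i x ≠ mact A x} := by
  intro x hx
  by_cases hρx : ρ ≤ ‖x‖
  · exact Or.inr fun hf => hx ((retard_of_le_norm hρx).trans hf)
  · exact Or.inl (mem_closedBall_zero_iff.2 (not_le.1 hρx).le)

theorem fderiv_eq_mCLM_of_eqOn_annulus {g : E2 → E2} {C : M2}
    (hlin : ∀ x : E2, r ≤ ‖x‖ → ‖x‖ ≤ R → g x = mact C x)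
    (hx₁ : r < ‖x‖) (hx₂ : ‖x‖ < R) : fderiv ℝ g x = mCLM C := by
  have hC : g =ᶠ[𝓝 x] mact C := by
    filter_upwards [(continuous_norm.tendsto x).eventually (lt_mem_nhds hx₁),
      (continuous_norm.tendsto x).eventually (gt_mem_nhds hx₂)] with z hz₁ hz₂
    exact hlin z hz₁.le hz₂.le
  exact hC.fderiv_eq.trans (mCLM C).fderiv

theorem norm_fderiv_retard_sub_le (hret : IsRetardable n f B lam r R)
    (hrρ' : r < ρ') (hρ'ρ : ρ' < ρ) (hρR : ρ < R) {L : E2 →L[ℝ] E2} {c : ℝ}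
    (hder : ∀ x, ‖fderiv ℝ (f i) x - L‖ ≤ c) (x : E2) :
    ‖fderiv ℝ (retard n f B lam ρ' ρ m i) x - L‖ ≤ c := by
  obtain ⟨-, hlam₀, hlam₁, hr₀, -, -, hlin⟩ := hret
  have hk : 0 < lam ^ m := pow_pos hlam₀ m
  have hk₁ : lam ^ m ≤ 1 := pow_le_one₀ hlam₀.le hlam₁.le
  have hnorm := continuous_norm.tendsto x
  rcases lt_or_ge ‖x‖ (lam ^ m * ρ') with hinner | hx₁
  · have hρ : lam ^ m * ρ' ≤ ρ := by nlinarith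
    have hconj : retard n f B lam ρ' ρ m i =ᶠ[𝓝 x] fun z => lam ^ m • f i ((lam ^ m)⁻¹ • z) := by
      filter_upwards [hnorm.eventually (gt_mem_nhds hinner)] with z hz
      exact retard_of_norm_lt hρ hz
    rw [hconj.fderiv_eq, fderiv_smul_comp_inv_smul _ hk.ne']
    exact hder _
  rcases lt_or_ge ‖x‖ R with hx₂ | hRx
  · have hkr : lam ^ m * r < ‖x‖ := by nlinarith
    have hB : retard n f B lam ρ' ρ m i =ᶠ[𝓝 x] mact (B i) := by
      filter_upwards [hnorm.eventually (lt_mem_nhds hkr),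
        hnorm.eventually (gt_mem_nhds hx₂)] with z hz₁ hz₂
      exact retard_eq_mact (hlin i) hk hrρ'.le hρ'ρ.le (by linarith) hz₁.le hz₂.le
    obtain ⟨y, hy⟩ := exists_norm_eq E2 (hr₀.trans (hrρ'.trans hρ'ρ)).le
    rw [hB.fderiv_eq, show fderiv ℝ (mact (B i)) x = mCLM (B i) from (mCLM (B i)).fderiv,
      ← fderiv_eq_mCLM_of_eqOn_annulus (hlin i) (hy ▸ hrρ'.trans hρ'ρ) (hy ▸ hρR)]
    exact hder y
  · have hf : retard n f B lam ρ' ρ m i =ᶠ[𝓝 x] f i := by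
      filter_upwards [hnorm.eventually (lt_mem_nhds (hρR.trans_le hRx))] with z hz
      exact retard_of_le_norm hz.le
    rw [hf.fderiv_eq]
    exact hder x

end Retard

theorem stmt3_general (n : ℕ) (ε : ℝ) (A B : ZMod n → M2) (f : ZMod n → E2 → E2)
    (lam r R : ℝ)
    (hret : IsRetardable n f B lam r R)
    (hpert : IsPerturbation n ε f A)
    (N : ZMod n → Set E2)
    (hNball : ∀ i, Metric.closedBall (0 : E2) R ⊆ N i)
    (hNsupp : ∀ i, {x : E2 | f i x ≠ mact (A i) x} ⊆ N i) :
    ∀ (m : ℕ) (ρ' ρ : ℝ), r < ρ' → ρ' < ρ → ρ < R →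
      IsPerturbation n ε (retard n f B lam ρ' ρ m) A ∧
      ∀ (i : ZMod n) (x : E2), x ∉ N i → retard n f B lam ρ' ρ m i x = mact (A i) x := by
  obtain ⟨hbdd, c, hcε, hder⟩ := hpert
  intro m ρ' ρ hrρ' hρ'ρ hρR
  refine ⟨⟨fun i => (Metric.isBounded_closedBall.union (hbdd i)).subset
    (setOf_retard_ne_subset (A i)), c, hcε,
    fun i => norm_fderiv_retard_sub_le hret hrρ' hρ'ρ hρR (hder i)⟩, fun i x hxN => ?_⟩
  have hRx : R < ‖x‖ := not_le.1 fun hxR => hxN (hNball i (mem_closedBall_zero_iff.2 hxR))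
  rw [retard_of_le_norm (hρR.trans hRx).le]
  by_contra hne
  exact hxN (hNsupp i hne)

/-- If a retardable contracting diffeomorphism cocycle is an `ε`-perturbation of
a linear cocycle `A`, supported (together with the ball of radius `R`) in open sets `N i`, then
every `m`-retard is again an `ε`-perturbation of `A` and coincides with `A` outside `N i`. -/
theorem stmt3 (n : ℕ) (hn : 1 ≤ n) (ε : ℝ) (A B : ZMod n → M2) (f : ZMod n → E2 → E2)
    (lam r R : ℝ)
    (hAunit : ∀ i, IsUnit (A i))
    (hdiff : IsDiffeoCocycle n f) (hcontr : IsContractingCocycle n f)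
    (hret : IsRetardable n f B lam r R)
    (hpert : IsPerturbation n ε f A)
    (N : ZMod n → Set E2)
    (hNopen : ∀ i, IsOpen (N i))
    (hNball : ∀ i, Metric.closedBall (0 : E2) R ⊆ N i)
    (hNsupp : ∀ i, {x : E2 | f i x ≠ mact (A i) x} ⊆ N i) :
    ∀ (m : ℕ) (ρ' ρ : ℝ), r < ρ' → ρ' < ρ → ρ < R →
      IsPerturbation n ε (retard n f B lam ρ' ρ m) A ∧
      ∀ (i : ZMod n) (x : E2), x ∉ N i → retard n f B lam ρ' ρ m i x = mact (A i) x :=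
  stmt3_general n ε A B f lam r R hret hpert N hNball hNsupp
end

section
/- Let V be a real normed vector space and let a : ℝ → V be a C^∞ map. Then for every δ > 0 there exists a C^∞ non-decreasing function θ : [0,∞) → [0,1] such that θ vanishes on a neighborhood of 0, θ(t) = 1 for every t > 1, and for every t > 0 the derivative of the composition satisfies ‖(a∘θ)'(t)‖ < δ/t. -/
/-!
With `φ` a smooth step from `0` (on `t ≤ 0`) to `1` (on `t ≥ 1`), take `θ t = φ (1 + K log t)`.
Then `θ' t = φ' · K / t`, so `‖(a ∘ θ)' t‖ ≤ K · sup |φ'| · sup_{[0,1]} ‖a'‖ / t`, which is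
`< δ / t` once `K` is small. To make `θ` smooth at `0`, `log t` is replaced by `log (t² + r²)`,
whose derivative is still at most `2 / t`, and the result is multiplied by `φ (2t / r)`. For
`2 r² ≤ exp (-1 / K)` the first factor already vanishes on `[0, r]`, so the second one only
kills `t ≤ 0` and does not affect the derivative where `θ` is not locally zero.
-/

open Filter Topology Real Set

namespace Real.smoothTransition

lemma hasCompactSupport_deriv : HasCompactSupport (deriv smoothTransition) := by
  refine HasCompactSupport.intro isCompact_Icc (K := Icc 0 1) fun x hx => ?_
  rcases not_and_or.mp hx with hx | hx
  · have : smoothTransition =ᶠ[𝓝 x] fun _ => 0 :=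
      eventually_of_mem (Iio_mem_nhds (not_le.mp hx)) fun y hy => zero_of_nonpos (le_of_lt hy)
    rw [this.deriv_eq, deriv_const]
  · have : smoothTransition =ᶠ[𝓝 x] fun _ => 1 :=
      eventually_of_mem (Ioi_mem_nhds (not_le.mp hx)) fun y hy => one_of_one_le (le_of_lt hy)
    rw [this.deriv_eq, deriv_const]

lemma exists_abs_deriv_le : ∃ B, ∀ x, |deriv smoothTransition x| ≤ B := by
  simpa only [Real.norm_eq_abs] using
    (smoothTransition.contDiff (n := 1).continuous_deriv le_rfl).bounded_above_of_compact_support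
      hasCompactSupport_deriv

end Real.smoothTransition

noncomputable def logRamp (K r t : ℝ) : ℝ := 1 + K * log (t ^ 2 + r ^ 2)

section logRamp

variable {K r : ℝ}

lemma contDiff_logRamp {n : WithTop ℕ∞} (hr : r ≠ 0) : ContDiff ℝ n (logRamp K r) :=
  contDiff_const.add <| contDiff_const.mul <|
    ((contDiff_id.pow 2).add contDiff_const).log fun t => by positivity

lemma hasDerivAt_logRamp (hr : r ≠ 0) (t : ℝ) :
    HasDerivAt (logRamp K r) (K * (2 * t / (t ^ 2 + r ^ 2))) t := by
  unfold logRamp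
  have h := ((hasDerivAt_pow 2 t).add_const (r ^ 2)).log (by positivity)
  simpa using (h.const_mul K).const_add 1

lemma abs_deriv_logRamp_le (hK : 0 ≤ K) (hr : r ≠ 0) {t : ℝ} (ht : 0 < t) :
    |deriv (logRamp K r) t| ≤ 2 * K / t := by
  rw [(hasDerivAt_logRamp hr t).deriv, abs_of_nonneg (by positivity)]
  calc K * (2 * t / (t ^ 2 + r ^ 2)) ≤ K * (2 / t) := by
        refine mul_le_mul_of_nonneg_left ?_ hK
        rw [div_le_div_iff₀ (by positivity) ht]
        nlinarith [sq_nonneg r]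
    _ = 2 * K / t := by ring

lemma monotoneOn_logRamp (hK : 0 ≤ K) (hr : r ≠ 0) : MonotoneOn (logRamp K r) (Ici 0) := by
  intro s hs t _ hst
  unfold logRamp
  gcongr

lemma logRamp_nonpos (hK : 0 < K) (hr : r ≠ 0) {t : ℝ} (ht : t ^ 2 + r ^ 2 ≤ exp (-1 / K)) :
    logRamp K r t ≤ 0 := by
  have hlog : log (t ^ 2 + r ^ 2) ≤ -1 / K := by
    rw [← log_exp (-1 / K)]
    exact log_le_log (by positivity) ht
  have : K * log (t ^ 2 + r ^ 2) ≤ -1 := by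
    calc K * log (t ^ 2 + r ^ 2) ≤ K * (-1 / K) := by gcongr
      _ = -1 := by field_simp
  unfold logRamp
  linarith

lemma one_le_logRamp (hK : 0 ≤ K) {t : ℝ} (ht : 1 ≤ t ^ 2 + r ^ 2) : 1 ≤ logRamp K r t := by
  unfold logRamp
  have := log_nonneg ht
  nlinarith

end logRamp

noncomputable def cutoffLogRamp (K r t : ℝ) : ℝ :=
  smoothTransition (logRamp K r t) * smoothTransition (2 * t / r)

section cutoffLogRamp

variable {K r : ℝ}

lemma contDiff_cutoffLogRamp {n : ℕ∞} (hr : r ≠ 0) : ContDiff ℝ n (cutoffLogRamp K r) :=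
  (smoothTransition.contDiff.comp (contDiff_logRamp hr)).mul
    (smoothTransition.contDiff.comp ((contDiff_const.mul contDiff_id).div_const r))

lemma monotoneOn_cutoffLogRamp (hK : 0 ≤ K) (hr : 0 < r) :
    MonotoneOn (cutoffLogRamp K r) (Ici 0) :=
  MonotoneOn.mul (smoothTransition.monotone.comp_monotoneOn (monotoneOn_logRamp hK hr.ne'))
    (smoothTransition.monotone.comp_monotoneOn fun s _ t _ hst => by gcongr)
    (fun _ _ => smoothTransition.nonneg _) (fun _ _ => smoothTransition.nonneg _)

lemma cutoffLogRamp_mem_Icc (t : ℝ) : cutoffLogRamp K r t ∈ Icc 0 1 :=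
  ⟨mul_nonneg (smoothTransition.nonneg _) (smoothTransition.nonneg _),
    mul_le_one₀ (smoothTransition.le_one _) (smoothTransition.nonneg _)
      (smoothTransition.le_one _)⟩

lemma cutoffLogRamp_eq_zero (hK : 0 < K) (hr : 0 < r) (hKr : 2 * r ^ 2 ≤ exp (-1 / K)) {t : ℝ}
    (ht : t < r) : cutoffLogRamp K r t = 0 := by
  rcases le_or_gt t 0 with ht0 | ht0
  · rw [cutoffLogRamp, smoothTransition.zero_of_nonpos (x := 2 * t / r) ?_, mul_zero]
    exact div_nonpos_of_nonpos_of_nonneg (by linarith) hr.le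
  · rw [cutoffLogRamp, smoothTransition.zero_of_nonpos (logRamp_nonpos hK hr.ne' ?_), zero_mul]
    nlinarith

lemma cutoffLogRamp_eq_one (hK : 0 ≤ K) (hr : 0 < r) (hr1 : r ≤ 1) {t : ℝ} (ht : 1 < t) :
    cutoffLogRamp K r t = 1 := by
  rw [cutoffLogRamp, smoothTransition.one_of_one_le (one_le_logRamp hK (by nlinarith)),
    smoothTransition.one_of_one_le ((one_le_div hr).2 (by linarith)), mul_one]

lemma eqOn_cutoffLogRamp (hr : 0 < r) :
    EqOn (cutoffLogRamp K r) (smoothTransition ∘ logRamp K r) (Ioi (r / 2)) := fun t ht => by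
  have : 1 ≤ 2 * t / r := (one_le_div hr).2 (by linarith [mem_Ioi.mp ht])
  rw [cutoffLogRamp, smoothTransition.one_of_one_le this, mul_one, Function.comp_apply]

lemma abs_deriv_cutoffLogRamp_le (hK : 0 < K) (hr : 0 < r) (hKr : 2 * r ^ 2 ≤ exp (-1 / K))
    {B : ℝ} (hB : ∀ x, |deriv smoothTransition x| ≤ B) {t : ℝ} (ht : 0 < t) :
    |deriv (cutoffLogRamp K r) t| ≤ B * (2 * K / t) := by
  have hB0 : 0 ≤ B := (abs_nonneg _).trans (hB 0)
  rcases lt_or_ge t r with htr | htr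
  · have : cutoffLogRamp K r =ᶠ[𝓝 t] fun _ => 0 :=
      eventually_of_mem (Iio_mem_nhds htr) fun s hs => cutoffLogRamp_eq_zero hK hr hKr hs
    rw [this.deriv_eq, deriv_const, abs_zero]
    positivity
  · have hloc : cutoffLogRamp K r =ᶠ[𝓝 t] smoothTransition ∘ logRamp K r :=
      eventually_of_mem (Ioi_mem_nhds (by linarith)) (eqOn_cutoffLogRamp hr)
    rw [hloc.deriv_eq,
      deriv_comp t (smoothTransition.contDiff (n := 1).differentiable one_ne_zero _)
        (contDiff_logRamp (n := 1) hr.ne' |>.differentiable one_ne_zero _), abs_mul]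
    exact mul_le_mul (hB _) (abs_deriv_logRamp_le hK.le hr.ne' ht) (abs_nonneg _) hB0

end cutoffLogRamp

theorem exists_smooth_reparam_abs_deriv_le {η : ℝ} (hη : 0 < η) :
    ∃ θ : ℝ → ℝ, ContDiff ℝ (⊤ : ℕ∞) θ ∧ MonotoneOn θ (Ici 0) ∧
      (∀ t, θ t ∈ Icc (0 : ℝ) 1) ∧ (∃ t₀ > (0 : ℝ), ∀ t ≤ t₀, θ t = 0) ∧
      (∀ t > (1 : ℝ), θ t = 1) ∧
      ∀ t > (0 : ℝ), |deriv θ t| ≤ η / t := by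
  obtain ⟨B, hB⟩ := smoothTransition.exists_abs_deriv_le
  have hB0 : 0 ≤ B := (abs_nonneg _).trans (hB 0)
  set K := η / (2 * (B + 1)) with hK_def
  have hK : 0 < K := by positivity
  have hexp : exp (-1 / K) ≤ 1 :=
    exp_le_one_iff.mpr (div_nonpos_of_nonpos_of_nonneg (by norm_num) hK.le)
  set r := exp (-1 / K) / 2 with hr_def
  have hr : 0 < r := by positivity
  have hKr : 2 * r ^ 2 ≤ exp (-1 / K) := by nlinarith [exp_pos (-1 / K)]
  refine ⟨cutoffLogRamp K r, contDiff_cutoffLogRamp hr.ne', monotoneOn_cutoffLogRamp hK.le hr,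
    cutoffLogRamp_mem_Icc, ⟨r / 2, by positivity, fun t ht =>
      cutoffLogRamp_eq_zero hK hr hKr (by linarith)⟩,
    fun t ht => cutoffLogRamp_eq_one hK.le hr (by linarith) ht, fun t ht => ?_⟩
  calc |deriv (cutoffLogRamp K r) t|
      _ ≤ B * (2 * K / t) := abs_deriv_cutoffLogRamp_le hK hr hKr hB ht
      _ = B / (B + 1) * (η / t) := by rw [hK_def]; field_simp
      _ ≤ η / t :=
          mul_le_of_le_one_left (by positivity) ((div_le_one (by positivity)).mpr (by linarith))

/-- Any smooth path can be smoothly reparametrized so that the derivative of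
the reparametrized path at time `t > 0` has norm less than `δ / t`. -/
theorem stmt5 (V : Type*) [NormedAddCommGroup V] [NormedSpace ℝ V]
    (a : ℝ → V) (ha : ContDiff ℝ (⊤ : ℕ∞) a) (δ : ℝ) (hδ : 0 < δ) :
    ∃ θ : ℝ → ℝ, ContDiff ℝ (⊤ : ℕ∞) θ ∧ MonotoneOn θ (Set.Ici 0) ∧
      (∀ t ∈ Set.Ici (0 : ℝ), θ t ∈ Set.Icc (0 : ℝ) 1) ∧
      (∃ t₀ > (0 : ℝ), ∀ t ≤ t₀, θ t = 0) ∧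
      (∀ t > (1 : ℝ), θ t = 1) ∧
      ∀ t > (0 : ℝ), ‖deriv (a ∘ θ) t‖ < δ / t := by
  obtain ⟨M, hM⟩ := isCompact_Icc.exists_bound_of_continuousOn
    (ha.continuous_deriv (by simp)).continuousOn (s := Icc (0 : ℝ) 1)
  have hM0 : 0 ≤ M := (norm_nonneg _).trans (hM 0 (left_mem_Icc.mpr zero_le_one))
  obtain ⟨θ, hθ, hmono, hθ01, hzero, hone, hderiv⟩ :=
    exists_smooth_reparam_abs_deriv_le (η := δ / (M + 1)) (by positivity)
  refine ⟨θ, hθ, hmono, fun t _ => hθ01 t, hzero, hone, fun t ht => ?_⟩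
  rw [deriv.scomp t (ha.differentiable (by simp) _) (hθ.differentiable (by simp) _), norm_smul,
    Real.norm_eq_abs]
  calc |deriv θ t| * ‖deriv a (θ t)‖ ≤ δ / (M + 1) / t * M :=
        mul_le_mul (hderiv t ht) (hM _ (hθ01 t)) (norm_nonneg _) (by positivity)
    _ = M / (M + 1) * (δ / t) := by ring
    _ < δ / t :=
        mul_lt_of_lt_one_left (by positivity) ((div_lt_one (by positivity)).mpr (by linarith))
end

section
/- Let T ∈ GL(2,ℝ) with det T > 0, let λ ∈ (0,1) and set Q := λ·Id. Then for every ε > 0 there exist an integer h ≥ 1 and matrices J_0, …, J_{h−1} and L_0, …, L_{h−1} in GL(2,ℝ) such that ‖J_i − Q‖ < ε and ‖L_i − Q‖ < ε for every i, and there exist c, c' ∈ (0,1) with T·(J_{h−1}···J_0) = c·Id and (L_{h−1}···L_0)·T = c'·Id; that is, both products are contracting homotheties. -/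
/-- The product `J (h-1) * ⋯ * J 0` of a finite tuple of matrices. -/
def finProdRev {h : ℕ} (J : Fin h → M2) : M2 := ((List.ofFn J).reverse).prod

/-!
The invertible matrices of positive determinant form a connected group, so they are generated
by any neighbourhood of the identity. Concretely, `S = L D U` with unipotent `L`, `U` and diagonal
`D` (after a shear if `S 0 0 = 0`), and each factor lies on a continuous one-parameter subgroup
`ψ`, where `ψ t = ψ (t / n) ^ n` with `ψ (t / n)` as close to `1` as we like. Writing `T⁻¹` as
a product of `k` matrices `B_i` with `‖B_i - 1‖ < ε / λ`, the matrices `J_i = L_i = λ B_i` are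
`ε`-close to `λ • 1` and multiply `T` to `λ ^ k • 1`.
-/

open Filter Topology

noncomputable section

lemma continuous_mnorm : Continuous mnorm :=
  continuous_norm.comp <| LinearMap.continuous_of_finiteDimensional
    (Matrix.toEuclideanCLM (n := Fin 2) (𝕜 := ℝ)).toAlgEquiv.toLinearMap

@[simp]
lemma mnorm_zero : mnorm 0 = 0 := by
  simp [mnorm, mCLM]

lemma mnorm_smul (r : ℝ) (A : M2) : mnorm (r • A) = |r| * mnorm A := by
  rw [mnorm, mnorm, mCLM, mCLM, map_smul, norm_smul, Real.norm_eq_abs]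

theorem AddChar.mem_closure_of_eventually_mem {M : Type*} [Monoid M] (ψ : AddChar ℝ M)
    {U : Set M} (hU : ∀ᶠ s in 𝓝 0, ψ s ∈ U) (t : ℝ) : ψ t ∈ Submonoid.closure U := by
  obtain ⟨n, hn, hnU⟩ :=
    ((eventually_ne_atTop 0).and ((tendsto_const_div_atTop_nhds_zero_nat t).eventually hU)).exists
  have hpow : ψ t = ψ (t / n) ^ n := by
    rw [← ψ.map_nsmul_eq_pow, nsmul_eq_mul, mul_div_cancel₀ _ (Nat.cast_ne_zero.2 hn)]
  rw [hpow]
  exact pow_mem (Submonoid.subset_closure hnU) n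

def nearOne (δ : ℝ) : Set M2 := {B | IsUnit B ∧ mnorm (B - 1) < δ}

lemma AddChar.mem_closure_nearOne (ψ : AddChar ℝ M2) (hψ : Continuous ψ) {δ : ℝ} (hδ : 0 < δ)
    (t : ℝ) : ψ t ∈ Submonoid.closure (nearOne δ) := by
  refine ψ.mem_closure_of_eventually_mem ?_ t
  have hlim : Tendsto (fun s => mnorm (ψ s - 1)) (𝓝 0) (𝓝 (mnorm (ψ 0 - 1))) :=
    ((continuous_mnorm.comp (hψ.sub continuous_const)).tendsto 0)
  rw [ψ.map_zero_eq_one, sub_self, mnorm_zero] at hlim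
  filter_upwards [hlim.eventually (gt_mem_nhds hδ)] with s hs
  exact ⟨ψ.val_isUnit s, hs⟩

def shearUpper : AddChar ℝ M2 where
  toFun t := !![1, t; 0, 1]
  map_zero_eq_one' := by ext i j; fin_cases i <;> fin_cases j <;> rfl
  map_add_eq_mul' s t := by
    ext i j; fin_cases i <;> fin_cases j <;> simp [Matrix.mul_apply, add_comm]

def shearLower : AddChar ℝ M2 where
  toFun t := !![1, 0; t, 1]
  map_zero_eq_one' := by ext i j; fin_cases i <;> fin_cases j <;> rfl
  map_add_eq_mul' s t := by
    ext i j; fin_cases i <;> fin_cases j <;> simp [Matrix.mul_apply]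

def diagExp (a d : ℝ) : AddChar ℝ M2 where
  toFun t := !![Real.exp (a * t), 0; 0, Real.exp (d * t)]
  map_zero_eq_one' := by ext i j; fin_cases i <;> fin_cases j <;> simp
  map_add_eq_mul' s t := by
    ext i j; fin_cases i <;> fin_cases j <;> simp [Matrix.mul_apply, mul_add, Real.exp_add]

def planeRotation : AddChar ℝ M2 where
  toFun θ := !![Real.cos θ, -Real.sin θ; Real.sin θ, Real.cos θ]
  map_zero_eq_one' := by ext i j; fin_cases i <;> fin_cases j <;> simp
  map_add_eq_mul' s t := by
    ext i j; fin_cases i <;> fin_cases j <;>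
      simp [Matrix.mul_apply, Real.cos_add, Real.sin_add] <;> ring

lemma continuous_shearUpper : Continuous shearUpper :=
  show Continuous fun t : ℝ => !![1, t; 0, 1] by fun_prop

lemma continuous_shearLower : Continuous shearLower :=
  show Continuous fun t : ℝ => !![1, 0; t, 1] by fun_prop

lemma continuous_diagExp (a d : ℝ) : Continuous (diagExp a d) :=
  show Continuous fun t : ℝ => !![Real.exp (a * t), 0; 0, Real.exp (d * t)] by fun_prop

lemma continuous_planeRotation : Continuous planeRotation :=
  show Continuous fun θ : ℝ => !![Real.cos θ, -Real.sin θ; Real.sin θ, Real.cos θ] by fun_prop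

def oneParameterClosure : Submonoid M2 :=
  Submonoid.closure {A | ∃ ψ : AddChar ℝ M2, Continuous ψ ∧ A ∈ Set.range ψ}

lemma AddChar.mem_oneParameterClosure (ψ : AddChar ℝ M2) (hψ : Continuous ψ) (t : ℝ) :
    ψ t ∈ oneParameterClosure :=
  Submonoid.subset_closure ⟨ψ, hψ, t, rfl⟩

lemma oneParameterClosure_le_closure_nearOne {δ : ℝ} (hδ : 0 < δ) :
    oneParameterClosure ≤ Submonoid.closure (nearOne δ) := by
  rw [oneParameterClosure, Submonoid.closure_le]
  rintro _ ⟨ψ, hψ, t, rfl⟩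
  exact ψ.mem_closure_nearOne hψ hδ t

lemma diag_mem_oneParameterClosure {a d : ℝ} (h : 0 < a * d) :
    !![a, 0; 0, d] ∈ oneParameterClosure := by
  have hpos {a d : ℝ} (ha : 0 < a) (hd : 0 < d) : !![a, 0; 0, d] ∈ oneParameterClosure := by
    convert (diagExp (Real.log a) (Real.log d)).mem_oneParameterClosure (continuous_diagExp _ _) 1
    simp [diagExp, Real.exp_log ha, Real.exp_log hd]
  rcases pos_and_pos_or_neg_and_neg_of_mul_pos h with ⟨ha, hd⟩ | ⟨ha, hd⟩
  · exact hpos ha hd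
  · -- `planeRotation Real.pi = -1`
    have hdecomp : !![a, 0; 0, d] = planeRotation Real.pi * !![-a, 0; 0, -d] := by
      ext i j; fin_cases i <;> fin_cases j <;> simp [planeRotation, Matrix.mul_apply]
    rw [hdecomp]
    exact mul_mem (planeRotation.mem_oneParameterClosure continuous_planeRotation Real.pi)
      (hpos (neg_pos.2 ha) (neg_pos.2 hd))

lemma mem_oneParameterClosure_of_det_pos_of_ne_zero {S : M2} (hS : 0 < S.det) (h : S 0 0 ≠ 0) :
    S ∈ oneParameterClosure := by
  have hdecomp : S = shearLower (S 1 0 / S 0 0) * !![S 0 0, 0; 0, S.det / S 0 0] *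
      shearUpper (S 0 1 / S 0 0) := by
    ext i j; fin_cases i <;> fin_cases j <;>
      simp [shearLower, shearUpper, Matrix.mul_apply, Matrix.det_fin_two] <;> field_simp
    ring
  have hdiag : 0 < S 0 0 * (S.det / S 0 0) := by rwa [mul_div_cancel₀ _ h]
  rw [hdecomp]
  exact mul_mem (mul_mem (shearLower.mem_oneParameterClosure continuous_shearLower _)
    (diag_mem_oneParameterClosure hdiag))
    (shearUpper.mem_oneParameterClosure continuous_shearUpper _)

lemma mem_oneParameterClosure_of_det_pos {S : M2} (hS : 0 < S.det) : S ∈ oneParameterClosure := by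
  by_cases h : S 0 0 = 0
  · have hS' : 0 < (shearUpper (-1) * S).det := by
      rw [Matrix.det_mul]
      simpa [shearUpper, Matrix.det_fin_two] using hS
    have h' : (shearUpper (-1) * S) 0 0 ≠ 0 := by
      rw [Matrix.det_fin_two, h, zero_mul, zero_sub] at hS
      have : S 1 0 ≠ 0 := by rintro h10; simp [h10] at hS
      simpa [shearUpper, Matrix.mul_apply, h] using this
    have hdecomp : S = shearUpper 1 * (shearUpper (-1) * S) := by
      rw [← mul_assoc, ← AddChar.map_add_eq_mul, add_neg_cancel, AddChar.map_zero_eq_one, one_mul]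
    rw [hdecomp]
    exact mul_mem (shearUpper.mem_oneParameterClosure continuous_shearUpper 1)
      (mem_oneParameterClosure_of_det_pos_of_ne_zero hS' h')
  · exact mem_oneParameterClosure_of_det_pos_of_ne_zero hS h

lemma exists_list_nearOne_prod_eq {δ : ℝ} (hδ : 0 < δ) {S : M2} (hS : 0 < S.det) :
    ∃ l : List M2, l ≠ [] ∧ (∀ B ∈ l, B ∈ nearOne δ) ∧ l.prod = S := by
  obtain ⟨l, hl, hprod⟩ := Submonoid.exists_list_of_mem_closure
    (oneParameterClosure_le_closure_nearOne hδ (mem_oneParameterClosure_of_det_pos hS))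
  have hone : (1 : M2) ∈ nearOne δ := ⟨isUnit_one, by simpa using hδ⟩
  refine ⟨1 :: l, List.cons_ne_nil _ _, ?_, by rw [List.prod_cons, one_mul, hprod]⟩
  simpa [hone] using hl

lemma smul_mem_nearOne {δ : ℝ} {B : M2} (hB : B ∈ nearOne δ) {r : ℝ} (hr : 0 < r) :
    IsUnit (r • B) ∧ mnorm (r • B - r • 1) < r * δ := by
  refine ⟨?_, ?_⟩
  · rw [← smul_one_mul, ← Algebra.algebraMap_eq_smul_one]
    exact (hr.ne'.isUnit.map (algebraMap ℝ M2)).mul hB.1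
  · rw [← smul_sub, mnorm_smul, abs_of_pos hr]
    exact mul_lt_mul_of_pos_left hB.2 hr

lemma finProdRev_get_reverse (l : List M2) : finProdRev l.reverse.get = l.prod := by
  rw [finProdRev, List.ofFn_get, List.reverse_reverse]

end

theorem stmt6_general (T : M2) (hdet : 0 < T.det)
    (lam : ℝ) (hlam : lam ∈ Set.Ioo (0 : ℝ) 1) (ε : ℝ) (hε : 0 < ε) :
    ∃ h : ℕ, 1 ≤ h ∧ ∃ J L : Fin h → M2,
      (∀ i, IsUnit (J i) ∧ IsUnit (L i) ∧
        mnorm (J i - lam • (1 : M2)) < ε ∧ mnorm (L i - lam • (1 : M2)) < ε) ∧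
      ∃ c c' : ℝ, c ∈ Set.Ioo (0 : ℝ) 1 ∧ c' ∈ Set.Ioo (0 : ℝ) 1 ∧
        T * finProdRev J = c • (1 : M2) ∧ finProdRev L * T = c' • (1 : M2) := by
  obtain ⟨hlam0, hlam1⟩ := hlam
  have hT : IsUnit T.det := hdet.ne'.isUnit
  have hinv : 0 < T⁻¹.det := by
    rw [Matrix.det_nonsing_inv, Ring.inverse_eq_inv]
    exact inv_pos.2 hdet
  obtain ⟨l, hne, hl, hprod⟩ := exists_list_nearOne_prod_eq (div_pos hε hlam0) hinv
  set J := (l.map (lam • ·)).reverse.get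
  have hJ : finProdRev J = lam ^ l.length • T⁻¹ := by
    rw [finProdRev_get_reverse, ← List.smul_prod, hprod]
  have hc : lam ^ l.length ∈ Set.Ioo (0 : ℝ) 1 :=
    ⟨pow_pos hlam0 _, pow_lt_one₀ hlam0.le hlam1 (List.length_pos_iff.2 hne).ne'⟩
  refine ⟨_, List.length_pos_iff.2 (by simpa using hne), J, J, fun i => ?_,
    _, _, hc, hc, ?_, ?_⟩
  · obtain ⟨B, hB, hBi⟩ : ∃ B ∈ l, lam • B = J i :=
      List.mem_map.1 (List.mem_reverse.1 (List.get_mem _ i))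
    rw [← hBi]
    obtain ⟨hunit, hnorm⟩ := smul_mem_nearOne (hl B hB) hlam0
    rw [mul_div_cancel₀ _ hlam0.ne'] at hnorm
    exact ⟨hunit, hunit, hnorm, hnorm⟩
  · rw [hJ, mul_smul_comm, Matrix.mul_nonsing_inv T hT]
  · rw [hJ, smul_mul_assoc, Matrix.nonsing_inv_mul T hT]

/-- Any orientation-preserving invertible matrix can be turned into a
contracting homothety by multiplying (on either side) by matrices arbitrarily close to a given
contracting homothety `Q = lam • Id`. -/
theorem stmt6 (T : M2) (hT : IsUnit T) (hdet : 0 < T.det)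
    (lam : ℝ) (hlam : lam ∈ Set.Ioo (0 : ℝ) 1) (ε : ℝ) (hε : 0 < ε) :
    ∃ h : ℕ, 1 ≤ h ∧ ∃ J L : Fin h → M2,
      (∀ i, IsUnit (J i) ∧ IsUnit (L i) ∧
        mnorm (J i - lam • (1 : M2)) < ε ∧ mnorm (L i - lam • (1 : M2)) < ε) ∧
      ∃ c c' : ℝ, c ∈ Set.Ioo (0 : ℝ) 1 ∧ c' ∈ Set.Ioo (0 : ℝ) 1 ∧
        T * finProdRev J = c • (1 : M2) ∧ finProdRev L * T = c' • (1 : M2) :=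
  stmt6_general T hdet lam hlam ε hε
end

section
/- Let 0 < λ₂ < λ₁ < 1, let D := diag(λ₁, λ₂), let R(t) be the rotation matrix by angle t (with entries cos t, −sin t; sin t, cos t), and set M(t) := R(−t)·D·R(t)·D. Then: (1) for every t with 0 ≤ t < π/2, the matrix M(t) has two distinct real eigenvalues, both lying in the open interval (0,1); (2) M(π/2) = λ₁λ₂·Id, a contracting homothety. -/
/-- The rotation matrix of angle `t`. -/
noncomputable def rotM (t : ℝ) : M2 := !![Real.cos t, -Real.sin t; Real.sin t, Real.cos t]

/-- The diagonal matrix `diag (a, b)`. -/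
def diagM (a b : ℝ) : M2 := !![a, 0; 0, b]

/-! The eigenvalues of `M(t)` are the roots of `X² - τ X + δ` with `δ = det M(t) = (λ₁λ₂)²` and
`τ = tr M(t) = cos² t (λ₁ - λ₂)² + 2 λ₁λ₂`. For `cos t ≠ 0` the discriminant
`cos² t (λ₁ - λ₂)² (cos² t (λ₁ - λ₂)² + 4 λ₁λ₂)` is positive, and both roots lie in `(0, 1)` because
`δ > 0`, `τ > 0` and the value `1 - τ + δ ≥ (1 - λ₁²)(1 - λ₂²)` at `1` is positive. At `t = π/2`
conjugation by the quarter turn swaps the diagonal entries of `D`, so `M(π/2) = diag(λ₂, λ₁) D`. -/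

open Polynomial

lemma Matrix.charpoly_fin_two_eq_mul {R : Type*} [CommRing R] [Nontrivial R]
    (A : Matrix (Fin 2) (Fin 2) R) {a b : R} (htr : A.trace = a + b) (hdet : A.det = a * b) :
    A.charpoly = (X - C a) * (X - C b) := by
  rw [A.charpoly_fin_two, htr, hdet, C_add, C_mul]
  ring

lemma exists_ne_mem_Ioo_of_sum_prod {τ δ : ℝ} (hδ0 : 0 < δ) (hδ1 : δ < 1) (hτ0 : 0 < τ)
    (hdisc : 4 * δ < τ ^ 2) (hτ1 : τ < 1 + δ) :
    ∃ a b : ℝ, a ≠ b ∧ a ∈ Set.Ioo (0 : ℝ) 1 ∧ b ∈ Set.Ioo (0 : ℝ) 1 ∧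
      τ = a + b ∧ δ = a * b := by
  set q := √(τ ^ 2 - 4 * δ)
  have hq0 : 0 < q := Real.sqrt_pos.2 (by linarith)
  have hq2 : q ^ 2 = τ ^ 2 - 4 * δ := Real.sq_sqrt (by linarith)
  have hqτ : q < τ := by nlinarith
  have hq1 : q < 2 - τ := by nlinarith
  refine ⟨(τ + q) / 2, (τ - q) / 2, by linarith, ⟨by linarith, by linarith⟩,
    ⟨by linarith, by linarith⟩, by ring, by linear_combination hq2 / 4⟩

lemma exists_ne_mem_Ioo_sum_eq_and_prod_eq_sq {a b c : ℝ} (ha0 : 0 < a) (ha1 : a < 1) (hb0 : 0 < b)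
    (hb1 : b < 1) (hab : a ≠ b) (hc0 : 0 < c) (hc1 : c ≤ 1) :
    ∃ μ₁ μ₂ : ℝ, μ₁ ≠ μ₂ ∧ μ₁ ∈ Set.Ioo (0 : ℝ) 1 ∧ μ₂ ∈ Set.Ioo (0 : ℝ) 1 ∧
      c * (a - b) ^ 2 + 2 * a * b = μ₁ + μ₂ ∧ (a * b) ^ 2 = μ₁ * μ₂ := by
  have hab0 : 0 < a * b := mul_pos ha0 hb0
  have hab1 : a * b < 1 := by nlinarith
  have hd : 0 < c * (a - b) ^ 2 := mul_pos hc0 (sq_pos_of_ne_zero (sub_ne_zero.2 hab))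
  have hdisc : (c * (a - b) ^ 2 + 2 * a * b) ^ 2 - 4 * (a * b) ^ 2
      = c * (a - b) ^ 2 * (c * (a - b) ^ 2 + 4 * a * b) := by
    ring
  have hτ : c * (a - b) ^ 2 + 2 * a * b ≤ a ^ 2 + b ^ 2 := by
    nlinarith [sq_nonneg (a - b)]
  have h1ab : 0 < (1 - a ^ 2) * (1 - b ^ 2) := mul_pos (by nlinarith) (by nlinarith)
  exact exists_ne_mem_Ioo_of_sum_prod (by positivity) (by nlinarith) (by linarith) (by nlinarith)
    (by nlinarith)

lemma det_rotM (t : ℝ) : (rotM t).det = 1 := by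
  simp [rotM, Matrix.det_fin_two_of, ← sq, Real.cos_sq_add_sin_sq]

lemma det_diagM (a b : ℝ) : (diagM a b).det = a * b := by
  simp [diagM, Matrix.det_fin_two_of]

lemma det_rotM_neg_mul_diagM_mul_rotM_mul_diagM (t a b : ℝ) :
    (rotM (-t) * diagM a b * rotM t * diagM a b).det = (a * b) ^ 2 := by
  simp only [Matrix.det_mul, det_rotM, det_diagM]
  ring

lemma trace_rotM_neg_mul_diagM_mul_rotM_mul_diagM (t a b : ℝ) :
    (rotM (-t) * diagM a b * rotM t * diagM a b).trace
      = Real.cos t ^ 2 * (a - b) ^ 2 + 2 * a * b := by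
  simp only [rotM, diagM, Real.cos_neg, Real.sin_neg, Matrix.mul_fin_two, Matrix.trace_fin_two_of]
  linear_combination (2 * a * b) * Real.sin_sq_add_cos_sq t

lemma rotM_neg_pi_div_two_mul_diagM_mul_rotM_pi_div_two (a b : ℝ) :
    rotM (-(Real.pi / 2)) * diagM a b * rotM (Real.pi / 2) = diagM b a := by
  simp [rotM, diagM]

lemma diagM_mul_diagM_swap (a b : ℝ) : diagM b a * diagM a b = (a * b) • (1 : M2) := by
  simp [diagM, Matrix.one_fin_two, mul_comm]

/-- For `0 < λ₂ < λ₁ < 1`, the matrix `M(t) = R(-t)·D·R(t)·D` has two distinct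
real eigenvalues in `(0,1)` for `0 ≤ t < π/2`, and is the contracting homothety `λ₁λ₂·Id`
at `t = π/2`. -/
theorem stmt7 (l1 l2 : ℝ) (h2 : 0 < l2) (h21 : l2 < l1) (h1 : l1 < 1) :
    (∀ t : ℝ, 0 ≤ t → t < Real.pi / 2 →
      ∃ μ₁ μ₂ : ℝ, μ₁ ≠ μ₂ ∧ μ₁ ∈ Set.Ioo (0 : ℝ) 1 ∧ μ₂ ∈ Set.Ioo (0 : ℝ) 1 ∧
        (rotM (-t) * diagM l1 l2 * rotM t * diagM l1 l2).charpoly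
          = (Polynomial.X - Polynomial.C μ₁) * (Polynomial.X - Polynomial.C μ₂)) ∧
    rotM (-(Real.pi / 2)) * diagM l1 l2 * rotM (Real.pi / 2) * diagM l1 l2
      = (l1 * l2) • (1 : M2) := by
  refine ⟨fun t ht0 ht => ?_, ?_⟩
  · have hcos : 0 < Real.cos t := Real.cos_pos_of_mem_Ioo ⟨by linarith [Real.pi_pos], ht⟩
    obtain ⟨μ₁, μ₂, hne, hμ₁, hμ₂, hτ, hδ⟩ :=
      exists_ne_mem_Ioo_sum_eq_and_prod_eq_sq (h2.trans h21) h1 h2 (h21.trans h1) h21.ne'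
        (pow_pos hcos 2) (Real.cos_sq_le_one t)
    refine ⟨μ₁, μ₂, hne, hμ₁, hμ₂, Matrix.charpoly_fin_two_eq_mul _ ?_ ?_⟩
    · rw [trace_rotM_neg_mul_diagM_mul_rotM_mul_diagM, hτ]
    · rw [det_rotM_neg_mul_diagM_mul_rotM_mul_diagM, hδ]
  · rw [rotM_neg_pi_div_two_mul_diagM_mul_rotM_pi_div_two, diagM_mul_diagM_swap]
end

section
/- Let E be a finite-dimensional real normed vector space and let F : E → E be a C¹ map with F(0) = 0. Suppose there exist an integer k ≥ 1 and a constant c < 1 such that ‖D(F^k)(x)‖ ≤ c for every x ∈ E (where F^k is the k-th iterate and D denotes the derivative). Then every orbit converges to the origin: for every x ∈ E, F^m(x) → 0 as m → ∞. -/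
open Filter Topology

/-!
By the mean value inequality `F^[k]` is a `c`-Lipschitz map fixing `0`, so its iterates
contract every point to `0` geometrically. Along each residue class `r` modulo `k` the orbit of
`F` is the image of that sequence under `F^[r]`, which is continuous and fixes `0`.
-/

open Function

theorem Filter.tendsto_of_forall_mul_add {α : Type*} {u : ℕ → α} {l : Filter α} {k : ℕ}
    (hk : 0 < k) (h : ∀ r < k, Tendsto (fun n => u (k * n + r)) atTop l) :
    Tendsto u atTop l := by
  rw [tendsto_def]
  intro s hs
  have hall : ∀ᶠ n in atTop, ∀ r ∈ Set.Iio k, u (k * n + r) ∈ s :=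
    (eventually_all_finite (Set.finite_Iio k)).2 fun r hr => h r hr hs
  filter_upwards [(Nat.tendsto_div_const_atTop hk.ne').eventually hall] with m hm
  simpa only [Set.mem_preimage, Nat.div_add_mod] using hm (m % k) (Nat.mod_lt m hk)

theorem LipschitzWith.tendsto_iterate_of_isFixedPt {α : Type*} [PseudoMetricSpace α]
    {K : NNReal} {f : α → α} (hf : LipschitzWith K f) (hK : K < 1) {p : α} (hp : IsFixedPt f p)
    (x : α) : Tendsto (fun n => f^[n] x) atTop (𝓝 p) := by
  have hdist : ∀ n, dist (f^[n] x) p ≤ K ^ n * dist x p := fun n => by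
    simpa only [iterate_fixed hp n, NNReal.coe_pow] using (hf.iterate n).dist_le_mul x p
  have hgeom : Tendsto (fun n => (K : ℝ) ^ n * dist x p) atTop (𝓝 0) := by
    simpa only [zero_mul] using
      (tendsto_pow_atTop_nhds_zero_of_lt_one K.coe_nonneg hK).mul_const (dist x p)
  exact tendsto_iff_dist_tendsto_zero.2 (squeeze_zero (fun _ => dist_nonneg) hdist hgeom)

theorem Function.tendsto_iterate_of_tendsto_iterate_iterate {α : Type*} [TopologicalSpace α]
    [T1Space α] {f : α → α} {p : α} (hf : ContinuousAt f p) (hp : IsFixedPt f p) {k : ℕ} {x : α}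
    (h : Tendsto (fun n => (f^[k])^[n] x) atTop (𝓝 p)) :
    Tendsto (fun n => f^[n] x) atTop (𝓝 p) := by
  rcases k.eq_zero_or_pos with rfl | hk
  · obtain rfl : x = p := by
      simpa only [iterate_zero, iterate_id, id, tendsto_const_nhds_iff] using h
    simpa only [iterate_fixed hp] using tendsto_const_nhds
  · refine tendsto_of_forall_mul_add hk fun r _ => ?_
    have hr := (hf.iterate hp r).tendsto.comp h
    rw [iterate_fixed hp r] at hr
    simpa only [comp_def, add_comm _ r, iterate_add_apply, iterate_mul] using hr

theorem stmt18_general (E : Type*) [NormedAddCommGroup E] [NormedSpace ℝ E]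
    (F : E → E) (hF : ContDiff ℝ 1 F) (h0 : F 0 = 0)
    (k : ℕ) (c : ℝ) (hc : c < 1)
    (hD : ∀ x : E, ‖fderiv ℝ (F^[k]) x‖ ≤ c) :
    ∀ x : E, Tendsto (fun m => F^[m] x) atTop (𝓝 (0 : E)) := by
  intro x
  have hc0 : 0 ≤ c := (norm_nonneg _).trans (hD 0)
  have hlip : LipschitzWith ⟨c, hc0⟩ F^[k] :=
    lipschitzWith_of_nnnorm_fderiv_le ((hF.differentiable one_ne_zero).iterate k)
      fun y => NNReal.coe_le_coe.1 (hD y)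
  exact tendsto_iterate_of_tendsto_iterate_iterate hF.continuous.continuousAt h0
    (hlip.tendsto_iterate_of_isFixedPt hc (iterate_fixed h0 k) x)

/-- If some iterate of a `C¹` map fixing the origin of a finite-dimensional
normed space has derivative of norm at most `c < 1` everywhere, then every orbit converges to
the origin. -/
theorem stmt18 (E : Type*) [NormedAddCommGroup E] [NormedSpace ℝ E] [FiniteDimensional ℝ E]
    (F : E → E) (hF : ContDiff ℝ 1 F) (h0 : F 0 = 0)
    (k : ℕ) (hk : 1 ≤ k) (c : ℝ) (hc : c < 1)
    (hD : ∀ x : E, ‖fderiv ℝ (F^[k]) x‖ ≤ c) :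
    ∀ x : E, Tendsto (fun m => F^[m] x) atTop (𝓝 (0 : E)) :=
  stmt18_general E F hF h0 k c hc hD
end

section
/- Let ε > 0 and let (A_i)_{i∈ℤ/nℤ} be an ε-flexible linear cocycle in GL(2,ℝ). Then there exists η > 0 such that every linear cocycle (B_i)_{i∈ℤ/nℤ} in GL(2,ℝ) with max_i ‖B_i − A_i‖ < η is 2ε-flexible; that is, flexibility is a robust property. -/
open Filter Topology

/-- An `ε`-flexible linear cocycle over `ℤ/nℤ` (Definition 1.1 of the paper). -/
def IsFlexible (n : ℕ) (ε : ℝ) (A : ZMod n → M2) : Prop :=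
  ∃ Af : ℝ → ZMod n → M2,
    -- a continuous one-parameter family of linear cocycles over `t ∈ [-1, 1]`
    (∀ i, ContinuousOn (fun t => Af t i) (Set.Icc (-1 : ℝ) 1)) ∧
    (∀ t ∈ Set.Icc (-1 : ℝ) 1, ∀ i, IsUnit (Af t i)) ∧
    -- the diameter of the family is `< ε`
    (∀ s ∈ Set.Icc (-1 : ℝ) 1, ∀ t ∈ Set.Icc (-1 : ℝ) 1, ∀ i,
      mnorm (Af s i - Af t i) < ε) ∧
    -- at `t = 0` it is the given cocycle
    Af 0 = A ∧
    -- at `t = -1` the product in the period is a homothety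
    (∃ c : ℝ, cocProd n (Af (-1)) = c • (1 : M2)) ∧
    -- for `t ∈ (-1,1)` the product has two distinct positive contracting eigenvalues
    (∀ t ∈ Set.Ioo (-1 : ℝ) 1, ∃ μ₁ μ₂ : ℝ, 0 < μ₂ ∧ μ₂ < μ₁ ∧ μ₁ < 1 ∧
      (cocProd n (Af t)).charpoly
        = (Polynomial.X - Polynomial.C μ₁) * (Polynomial.X - Polynomial.C μ₂)) ∧
    -- the smallest eigenvalue of the product is `< 1` for every `t ∈ [-1,1]`
    (∀ t ∈ Set.Icc (-1 : ℝ) 1, ∃ μ : ℝ, μ < 1 ∧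
      (cocProd n (Af t)).charpoly.IsRoot μ ∧
      ∀ μ' : ℝ, (cocProd n (Af t)).charpoly.IsRoot μ' → μ ≤ μ') ∧
    -- at `t = 1` the product has a real positive eigenvalue equal to `1`
    (cocProd n (Af 1)).charpoly.IsRoot 1


/-! Having two distinct eigenvalues in `(0, 1)` is a system of strict inequalities on the trace
and determinant of the period product, hence an open condition, and by compactness it survives
a small perturbation of the cocycle uniformly in `t ∈ [-1/2, 1/2]`. Given `B` close to `A`,
replace the family `A_t` by `A_t + φ(t) (B - A)`, where the tent `φ` equals `1` at `0` and
vanishes for `|t| ≥ 1/2`: the family is unchanged near the endpoints, passes through `B` at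
`t = 0`, and its diameter grows by at most `max_i ‖B_i - A_i‖ < ε`. -/
open Polynomial Set
-- With this norm on matrices, `‖A‖` is definitionally `mnorm A`.
open scoped Matrix.Norms.L2Operator

def IsStableNode (M : M2) : Prop :=
  ∃ μ₁ μ₂ : ℝ, 0 < μ₂ ∧ μ₂ < μ₁ ∧ μ₁ < 1 ∧ M.charpoly = (X - C μ₁) * (X - C μ₂)

lemma charpoly_eq_mul_iff_trace_det {R : Type*} [CommRing R] [Nontrivial R]
    (M : Matrix (Fin 2) (Fin 2) R) (a b : R) :
    M.charpoly = (X - C a) * (X - C b) ↔ M.trace = a + b ∧ M.det = a * b := by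
  rw [Matrix.charpoly_fin_two]
  constructor
  · intro h
    have h1 := congrArg (coeff · 1) h
    have h0 := congrArg (coeff · 0) h
    simp [coeff_X, coeff_C, mul_sub, sub_mul] at h0 h1
    exact ⟨by linear_combination -h1, by linear_combination h0⟩
  · rintro ⟨hT, hD⟩
    rw [hT, hD, C_add, C_mul]
    ring

lemma isStableNode_iff (M : M2) : IsStableNode M ↔
    0 < M.det ∧ 0 < M.trace ∧ M.trace < 2 ∧ 4 * M.det < M.trace ^ 2 ∧ M.trace < 1 + M.det := by
  constructor
  · rintro ⟨μ₁, μ₂, h₂, h₂₁, h₁, h⟩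
    obtain ⟨hT, hD⟩ := (charpoly_eq_mul_iff_trace_det M μ₁ μ₂).1 h
    rw [hT, hD]
    exact ⟨mul_pos (h₂.trans h₂₁) h₂, by linarith, by linarith, by nlinarith, by nlinarith⟩
  · rintro ⟨hD, hT, hT2, hdisc, hT1⟩
    set s := √(M.trace ^ 2 - 4 * M.det)
    have hs : 0 < s := Real.sqrt_pos.2 (by linarith)
    have hs2 : s ^ 2 = M.trace ^ 2 - 4 * M.det := Real.sq_sqrt (by linarith)
    refine ⟨(M.trace + s) / 2, (M.trace - s) / 2, by nlinarith, by linarith, by nlinarith,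
      (charpoly_eq_mul_iff_trace_det _ _ _).2 ⟨by ring, by nlinarith⟩⟩

lemma isOpen_setOf_isStableNode : IsOpen {M : M2 | IsStableNode M} := by
  simp only [isStableNode_iff, ofPred_and]
  refine (isOpen_lt ?_ ?_).inter ((isOpen_lt ?_ ?_).inter ((isOpen_lt ?_ ?_).inter
    ((isOpen_lt ?_ ?_).inter (isOpen_lt ?_ ?_)))) <;> fun_prop

lemma IsStableNode.det_pos {M : M2} (h : IsStableNode M) : 0 < M.det :=
  ((isStableNode_iff M).1 h).1

lemma IsStableNode.exists_min_root_lt_one {M : M2} (h : IsStableNode M) :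
    ∃ μ : ℝ, μ < 1 ∧ M.charpoly.IsRoot μ ∧ ∀ μ' : ℝ, M.charpoly.IsRoot μ' → μ ≤ μ' := by
  obtain ⟨μ₁, μ₂, -, h₂₁, h₁, h⟩ := h
  refine ⟨μ₂, by linarith, by simp [h], fun μ' hμ' => ?_⟩
  simp only [h, IsRoot, eval_mul, eval_sub, eval_X, eval_C, mul_eq_zero, sub_eq_zero] at hμ'
  rcases hμ' with rfl | rfl <;> linarith

lemma continuous_cocProd (n : ℕ) : Continuous (cocProd n) := by
  unfold cocProd
  simp_rw [← List.map_reverse]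
  exact continuous_list_prod _ fun i _ => continuous_apply _

lemma isUnit_of_det_cocProd_ne_zero {n : ℕ} [NeZero n] {A : ZMod n → M2}
    (h : (cocProd n A).det ≠ 0) (i : ZMod n) : IsUnit (A i) := by
  rw [Matrix.isUnit_iff_isUnit_det, isUnit_iff_ne_zero]
  intro hi
  apply h
  rw [cocProd, ← Matrix.coe_detMonoidHom, map_list_prod]
  refine List.prod_eq_zero (List.mem_map.2 ⟨A i, ?_, hi⟩)
  simpa using ⟨i.val, ZMod.val_lt i, congrArg A (ZMod.natCast_zmod_val i)⟩

lemma eventually_forall_add_mem_of_isCompact {X Y : Type*} [TopologicalSpace X]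
    [TopologicalSpace Y] [AddZeroClass Y] [ContinuousAdd Y] {K : Set X} (hK : IsCompact K)
    {F : X → Y} (hF : ∀ x ∈ K, ContinuousAt F x) {U : Set Y} (hU : IsOpen U)
    (hKU : ∀ x ∈ K, F x ∈ U) : ∀ᶠ d in 𝓝 (0 : Y), ∀ x ∈ K, F x + d ∈ U := by
  refine hK.eventually_forall_of_forall_eventually fun x hx => ?_
  have hcont : ContinuousAt (fun p : Y × X => F p.2 + p.1) (0, x) :=
    ((hF x hx).comp continuousAt_snd).add continuousAt_fst
  exact hcont.preimage_mem_nhds (hU.mem_nhds (by simpa using hKU x hx))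

lemma exists_radius_isStableNode_cocProd_add {n : ℕ} [NeZero n] {K : Set ℝ} (hK : IsCompact K)
    {Af : ℝ → ZMod n → M2} (hcont : ∀ t ∈ K, ContinuousAt Af t)
    (hnode : ∀ t ∈ K, IsStableNode (cocProd n (Af t))) :
    ∃ η > 0, ∀ D : ZMod n → M2, (∀ i, ‖D i‖ < η) →
      ∀ t ∈ K, IsStableNode (cocProd n (Af t + D)) := by
  obtain ⟨η, hη, h⟩ := Metric.eventually_nhds_iff.1 <| eventually_forall_add_mem_of_isCompact hK
    hcont (isOpen_setOf_isStableNode.preimage (continuous_cocProd n)) hnode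
  exact ⟨η, hη, fun D hD => h (by rwa [dist_zero_right, pi_norm_lt_iff hη])⟩

def tent (t : ℝ) : ℝ := max (1 - 2 * |t|) 0

lemma continuous_tent : Continuous tent := by unfold tent; fun_prop

lemma tent_mem_Icc (t : ℝ) : tent t ∈ Icc (0 : ℝ) 1 :=
  ⟨le_max_right _ _, max_le (by linarith [abs_nonneg t]) zero_le_one⟩

lemma tent_eq_zero {t : ℝ} (ht : 1 / 2 ≤ |t|) : tent t = 0 := max_eq_right (by linarith)

section TentPerturbation

variable {Y : Type*} [NormedAddCommGroup Y] [NormedSpace ℝ Y] {ι : Type*}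
  (F : ℝ → ι → Y) (D : ι → Y)

def tentPerturb (t : ℝ) : ι → Y := F t + tent t • D

lemma tentPerturb_zero : tentPerturb F D 0 = F 0 + D := by simp [tentPerturb, tent]

lemma tentPerturb_of_half_le_abs {t : ℝ} (ht : 1 / 2 ≤ |t|) : tentPerturb F D t = F t := by
  simp [tentPerturb, tent_eq_zero ht]

lemma continuousOn_tentPerturb {s : Set ℝ} (hF : ∀ i, ContinuousOn (fun t => F t i) s) (i : ι) :
    ContinuousOn (fun t => tentPerturb F D t i) s :=
  (hF i).add (continuous_tent.continuousOn.smul continuousOn_const)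

lemma norm_tent_smul_le (t : ℝ) (y : Y) : ‖tent t • y‖ ≤ ‖y‖ := by
  obtain ⟨h0, h1⟩ := tent_mem_Icc t
  rw [norm_smul, Real.norm_of_nonneg h0]
  exact mul_le_of_le_one_left (norm_nonneg y) h1

lemma norm_tentPerturb_sub_le (s t : ℝ) (i : ι) :
    ‖tentPerturb F D s i - tentPerturb F D t i‖ ≤ ‖F s i - F t i‖ + ‖D i‖ := by
  have h : tentPerturb F D s i - tentPerturb F D t i =
      (F s i - F t i) + (tent s - tent t) • D i := by
    simp only [tentPerturb, Pi.add_apply, Pi.smul_apply, sub_smul]; abel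
  obtain ⟨hs0, hs1⟩ := tent_mem_Icc s
  obtain ⟨ht0, ht1⟩ := tent_mem_Icc t
  calc _ ≤ ‖F s i - F t i‖ + ‖(tent s - tent t) • D i‖ := h ▸ norm_add_le _ _
    _ ≤ ‖F s i - F t i‖ + ‖D i‖ := by
      rw [norm_smul, Real.norm_eq_abs]
      gcongr
      exact mul_le_of_le_one_left (norm_nonneg _) (abs_le.2 ⟨by linarith, by linarith⟩)

end TentPerturbation

theorem stmt19_general (n : ℕ) (hn : 1 ≤ n) (ε : ℝ) (hε : 0 < ε)
    (A : ZMod n → M2) (hflex : IsFlexible n ε A) :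
    ∃ η > (0 : ℝ), ∀ B : ZMod n → M2, (∀ i, IsUnit (B i)) →
      (∀ i, mnorm (B i - A i) < η) → IsFlexible n (2 * ε) B := by
  have : NeZero n := ⟨by omega⟩
  obtain ⟨Af, hcont, hunit, hdiam, rfl, hhom, hnode, hmin, hone⟩ := hflex
  have hK : Icc (-(1 / 2)) (1 / 2) ⊆ Ioo (-1 : ℝ) 1 := Icc_subset_Ioo (by norm_num) (by norm_num)
  obtain ⟨η, hη, hηnode⟩ := exists_radius_isStableNode_cocProd_add isCompact_Icc
    (fun t ht => continuousAt_pi.2 fun i =>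
      (hcont i).continuousAt (Icc_mem_nhds (hK ht).1 (hK ht).2))
    (fun t ht => hnode t (hK ht))
  refine ⟨min η ε, lt_min hη hε, fun B _ hBA => ?_⟩
  set Bf := tentPerturb Af (B - Af 0)
  have houter : ∀ t, 1 / 2 ≤ |t| → Bf t = Af t := fun t => tentPerturb_of_half_le_abs _ _
  have hinner : ∀ t, |t| < 1 / 2 → IsStableNode (cocProd n (Bf t)) := fun t ht =>
    hηnode _ (fun i => (norm_tent_smul_le t _).trans_lt ((hBA i).trans_le (min_le_left _ _)))
      t (abs_le.1 ht.le)
  refine ⟨Bf, continuousOn_tentPerturb _ _ hcont, fun t ht i => ?_, fun s hs t ht i => ?_,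
    by simp [Bf, tentPerturb_zero], houter (-1) (by norm_num) ▸ hhom, fun t ht => ?_,
    fun t ht => ?_, houter 1 (by norm_num) ▸ hone⟩
  · rcases le_or_gt (1 / 2) |t| with h | h
    · exact houter t h ▸ hunit t ht i
    · exact isUnit_of_det_cocProd_ne_zero (hinner t h).det_pos.ne' i
  · calc mnorm (Bf s i - Bf t i) ≤ mnorm (Af s i - Af t i) + mnorm (B i - Af 0 i) :=
          norm_tentPerturb_sub_le Af (B - Af 0) s t i
      _ < ε + ε := add_lt_add (hdiam s hs t ht i) ((hBA i).trans_le (min_le_right _ _))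
      _ = 2 * ε := by ring
  · rcases le_or_gt (1 / 2) |t| with h | h
    · exact houter t h ▸ hnode t ht
    · exact hinner t h
  · rcases le_or_gt (1 / 2) |t| with h | h
    · exact houter t h ▸ hmin t ht
    · exact (hinner t h).exists_min_root_lt_one

/-- Flexibility is robust: every cocycle close enough to an `ε`-flexible
cocycle is `2ε`-flexible. -/
theorem stmt19 (n : ℕ) (hn : 1 ≤ n) (ε : ℝ) (hε : 0 < ε)
    (A : ZMod n → M2) (hAunit : ∀ i, IsUnit (A i)) (hflex : IsFlexible n ε A) :
    ∃ η > (0 : ℝ), ∀ B : ZMod n → M2, (∀ i, IsUnit (B i)) →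
      (∀ i, mnorm (B i - A i) < η) → IsFlexible n (2 * ε) B :=
  stmt19_general n hn ε hε A hflex
end
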